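/- The Smart Reverse Rejecting (SRR) rule is strategyproof: if agent i's priority for the preferential categories decreases from instance I to instance I' (the priorities of c_u^1 and c_u^2 remain equal to the baseline ordering ≻_π, which is the same in both instances), and i is unmatched under the SRR rule at I, then i is unmatched under the SRR rule at I'. -/

import Mathlib

open scoped Classical

/-- An instance of the rationing problem: a quota for every category and, for every
category `c`, a priority ranking `≿_c`: a total preorder on `N ∪ {∅}`, where we model
`N ∪ {∅}` as `Option N` with `none` playing the role of `∅`. -/
structure Inst (N C : Type*) where
  quota : C → ℕ
  prio : C → Option N → Option N → Prop
  total : ∀ c x y, prio c x y ∨ prio c y x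
  trans : ∀ c x y z, prio c x y → prio c y z → prio c x z

namespace Inst

variable {N C : Type*}

/-- The strict part `≻_c` of the priority ranking `≿_c`. -/
def Strict (I : Inst N C) (c : C) (x y : Option N) : Prop :=
  I.prio c x y ∧ ¬ I.prio c y x

/-- Agent `i` is eligible for category `c` if `i ≻_c ∅`. -/
def Eligible (I : Inst N C) (i : N) (c : C) : Prop :=
  I.Strict c (some i) none

end Inst

variable {N C : Type*} [Fintype N] [DecidableEq N] [DecidableEq C]

/-- The number of matched agents of (the function) `μ`. -/
def msize (μ : N → Option C) : ℕ :=
  (Finset.univ.filter fun i => μ i ≠ none).card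

/-- `μ` satisfies the capacity constraints: every category `c` is matched
to at most `quota c` agents. -/
def Inst.IsMatching (I : Inst N C) (μ : N → Option C) : Prop :=
  ∀ c, (Finset.univ.filter fun i => μ i = some c).card ≤ I.quota c

/-- A baseline ordering `≻_π`, given as a duplicate-free list of all agents,
listed from highest priority to lowest priority; so `i ≻_π j` iff
`order.indexOf i < order.indexOf j`. -/
def IsBaseline (order : List N) : Prop :=
  order.Nodup ∧ ∀ i : N, i ∈ order

/-- Agent `i`'s priority decreases from instance `I` to instance `I'`: quotas are unchanged,
the rankings restricted to `(N ∪ {∅}) \ {i}` are unchanged, and `i` only moves down: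
for all `x ≠ i`, `x ≿_c i` implies `x ≿'_c i` and `x ≻_c i` implies `x ≻'_c i`. -/
def PrioDecreases (I I' : Inst N C) (i : N) : Prop :=
  I.quota = I'.quota ∧
  (∀ (c : C) (x y : Option N), x ≠ some i → y ≠ some i → (I.prio c x y ↔ I'.prio c x y)) ∧
  (∀ (c : C) (x : Option N), x ≠ some i → I.prio c x (some i) → I'.prio c x (some i)) ∧
  (∀ (c : C) (x : Option N), x ≠ some i → I.Strict c x (some i) → I'.Strict c x (some i))

/-- `μ` complies with the eligibility requirements. -/
def Complies (I : Inst N C) (μ : N → Option C) : Prop :=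
  ∀ (i : N) (c : C), μ i = some c → I.Eligible i c

/-- The number of agents matched to a preferential category, i.e. a category other than the
unreserved subcategories `cu1` and `cu2`. -/
def beneCount2 (cu1 cu2 : C) (μ : N → Option C) : ℕ :=
  (Finset.univ.filter fun i => μ i ≠ none ∧ μ i ≠ some cu1 ∧ μ i ≠ some cu2).card

/-- `μ` is a matching of the reservation graph of the instance restricted to the
preferential categories that leaves all agents of `S` unmatched. -/
def PMatch (I : Inst N C) (cu1 cu2 : C) (S : Finset N) (μ : N → Option C) : Prop :=
  I.IsMatching μ ∧ (∀ i ∈ S, μ i = none) ∧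
    ∀ (i : N) (c : C), μ i = some c → c ≠ cu1 ∧ c ≠ cu2 ∧ I.Eligible i c

/-- The maximum number of agents of `N \ S` that can simultaneously be matched to
preferential categories. -/
noncomputable def msAvoid (I : Inst N C) (cu1 cu2 : C) (S : Finset N) : ℕ :=
  sSup {k | ∃ μ : N → Option C, PMatch I cu1 cu2 S μ ∧ msize μ = k}

/-- The set `N_1` of agents receiving an unreserved unit of `c_u^1` under the SRR rule:
considering the agents in order of the baseline ordering from highest to lowest priority,
agent `i` is added to `N_1` if `|N_1| < q_{c_u^1}` and the agents in `N \ (N_1 ∪ {i})` can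
still be matched to the preferential categories so as to form a maximum beneficiary
assignment. -/
noncomputable def srrN1 (I : Inst N C) (cu1 cu2 : C) (order : List N) : Finset N :=
  order.foldl
    (fun N1 i =>
      if N1.card < I.quota cu1 ∧
          msAvoid I cu1 cu2 (insert i N1) = msAvoid I cu1 cu2 (∅ : Finset N) then
        insert i N1
      else N1) ∅

/-- `μ` is a matching of the reduced reservation graph (restricted to the preferential
categories) in which the agents of `N1` are removed and, additionally, all edges `{j,c}`
such that some rejected agent `i ∈ R` has `i ≻_c j` are removed. -/
def PMatchR (I : Inst N C) (cu1 cu2 : C) (N1 R : Finset N) (μ : N → Option C) : Prop :=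
  PMatch I cu1 cu2 (N1 ∪ R) μ ∧
    ∀ (i : N) (c : C), μ i = some c → ∀ j ∈ R, ¬ I.Strict c (some j) (some i)

/-- The size of a maximum size matching of the reduced reservation graph (restricted to the
preferential categories, without the agents of `N1`, with rejected set `R`). -/
noncomputable def msR (I : Inst N C) (cu1 cu2 : C) (N1 R : Finset N) : ℕ :=
  sSup {k | ∃ μ : N → Option C, PMatchR I cu1 cu2 N1 R μ ∧ msize μ = k}

/-- The rejected set of the RR rule run on the agents outside `N1` with the preferential
categories, processing the agents from lowest to highest baseline priority. -/
noncomputable def srrRej (I : Inst N C) (cu1 cu2 : C) (order : List N) (N1 : Finset N) :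
    Finset N :=
  (order.filter fun i => decide (i ∉ N1)).foldr
    (fun i R =>
      if msR I cu1 cu2 N1 (insert i R) = msR I cu1 cu2 N1 (∅ : Finset N) then insert i R
      else R) ∅

/-- The final matching of the SRR rule, given the set `N1` of agents matched to `c_u^1` and
the matching `μP` of the remaining agents to the preferential categories: the agents left
unmatched receive the `q_{c_u^2}` units of `c_u^2` in order of the baseline ordering from
highest to lowest priority. -/
noncomputable def srrFinal (I : Inst N C) (cu1 cu2 : C) (order : List N) (N1 : Finset N)
    (μP : N → Option C) : N → Option C := fun i =>
  if i ∈ N1 then some cu1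
  else
    match μP i with
    | some c => some c
    | none =>
      if (Finset.univ.filter fun j =>
            j ∉ N1 ∧ μP j = none ∧ order.idxOf j < order.idxOf i).card <
          I.quota cu2 then
        some cu2
      else none

/-- `μ` is a possible output of the Smart Reverse Rejecting (SRR) rule. -/
def IsSRROutcome (I : Inst N C) (cu1 cu2 : C) (order : List N) (μ : N → Option C) : Prop :=
  ∃ μP : N → Option C,
    PMatchR I cu1 cu2 (srrN1 I cu1 cu2 order) (srrRej I cu1 cu2 order (srrN1 I cu1 cu2 order))
      μP ∧
    msize μP =
      msR I cu1 cu2 (srrN1 I cu1 cu2 order) (srrRej I cu1 cu2 order (srrN1 I cu1 cu2 order)) ∧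
    μ = srrFinal I cu1 cu2 order (srrN1 I cu1 cu2 order) μP

/-!
If `i` is unmatched at `I`, the RR rule rejects it, so some maximum beneficiary assignment at `I`
leaves `i` unmatched. Lowering `i`'s priority keeps valid every matching that leaves `i` unmatched,
and a matching valid at `I'` is valid at `I` as long as `i` is not rejected. Hence the sizes that
the SRR rule compares agree at `I` and `I'`, except possibly for those the RR rule compares after
rejecting `i`: the greedy choice of `N_1` is the same, and the RR rule takes the same decisions up
to and including the rejection of `i`. Both runs reject equally many agents in total, since the RR
rule matches every non-rejected agent; so equally many rejected agents rank above `i`, and the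
units of `c_u^2` run out before `i` again.
-/

open Finset

section Greedy

variable {α : Type*} [DecidableEq α]

def greedyStep (P : α → Finset α → Prop) [∀ x S, Decidable (P x S)] (x : α)
    (S : Finset α) : Finset α :=
  if P x S then insert x S else S

variable {P P' : α → Finset α → Prop} [∀ x S, Decidable (P x S)]
  [∀ x S, Decidable (P' x S)]

lemma subset_greedyStep (x : α) (S : Finset α) : S ⊆ greedyStep P x S := by
  unfold greedyStep
  split_ifs
  exacts [subset_insert x S, subset_rfl]

lemma greedyStep_subset_insert (x : α) (S : Finset α) : greedyStep P x S ⊆ insert x S := by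
  unfold greedyStep
  split_ifs
  exacts [subset_rfl, subset_insert x S]

lemma subset_foldr_greedyStep (L : List α) (T : Finset α) : T ⊆ L.foldr (greedyStep P) T := by
  induction L with
  | nil => exact subset_rfl
  | cons x L ih => exact ih.trans (subset_greedyStep x _)

lemma foldr_greedyStep_subset (L : List α) (T : Finset α) :
    L.foldr (greedyStep P) T ⊆ T ∪ L.toFinset := by
  induction L with
  | nil => simp
  | cons x L ih =>
    refine (greedyStep_subset_insert x _).trans (insert_subset_iff.2 ⟨by simp, ?_⟩)
    exact ih.trans (union_subset_union_right (by simp))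

lemma foldr_greedyStep_induction {Q : Finset α → Prop} (L : List α) {T : Finset α} (hT : Q T)
    (hQ : ∀ x S, Q S → P x S → Q (insert x S)) : Q (L.foldr (greedyStep P) T) := by
  induction L with
  | nil => exact hT
  | cons x L ih =>
    rw [List.foldr_cons, greedyStep]
    split_ifs with h
    exacts [hQ x _ ih h, ih]

lemma exists_not_of_notMem_foldr_greedyStep {L : List α} {T : Finset α} {x : α} (hx : x ∈ L)
    (hxF : x ∉ L.foldr (greedyStep P) T) : ∃ S ⊆ L.foldr (greedyStep P) T, ¬ P x S := by
  induction L with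
  | nil => cases hx
  | cons y L ih =>
    have hsub := subset_greedyStep (P := P) y (L.foldr (greedyStep P) T)
    rcases List.mem_cons.1 hx with rfl | hx
    · refine ⟨_, hsub, fun h => hxF ?_⟩
      simp [greedyStep, h]
    · obtain ⟨S, hS, hPS⟩ := ih hx fun h => hxF (hsub h)
      exact ⟨S, hS.trans hsub, hPS⟩

lemma greedyStep_of_mem_foldr_append_cons {L₁ L₂ : List α} {T : Finset α} {x : α}
    (hx : x ∈ (L₁ ++ x :: L₂).foldr (greedyStep P) T) (hx₁ : x ∉ L₁)
    (hx₂ : x ∉ L₂) (hxT : x ∉ T) : P x (L₂.foldr (greedyStep P) T) := by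
  by_contra h
  rw [List.foldr_append, List.foldr_cons, greedyStep, if_neg h] at hx
  have := foldr_greedyStep_subset L₁ _ hx
  simp only [mem_union, List.mem_toFinset, hx₁, or_false] at this
  simpa [hxT, hx₂] using foldr_greedyStep_subset L₂ T this

lemma foldr_greedyStep_congr {L : List α} {T : Finset α}
    (h₁ : ∀ x S, insert x S ⊆ L.foldr (greedyStep P) T → P x S → P' x S)
    (h₂ : ∀ x ∈ L, ∀ S ⊆ L.foldr (greedyStep P) T, P' x S → P x S) :
    L.foldr (greedyStep P') T = L.foldr (greedyStep P) T := by
  induction L with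
  | nil => rfl
  | cons x L ih =>
    set F := L.foldr (greedyStep P) T
    have hF : F ⊆ greedyStep P x F := subset_greedyStep x F
    rw [List.foldr_cons, List.foldr_cons,
      ih (fun y S hS => h₁ y S (hS.trans hF))
        (fun y hy S hS => h₂ y (List.mem_cons_of_mem x hy) S (hS.trans hF))]
    by_cases hP : P x F
    · have hstep : greedyStep P x F = insert x F := if_pos hP
      have hP' : P' x F := h₁ x F (by rw [List.foldr_cons, hstep]) hP
      rw [hstep, greedyStep, if_pos hP']
    · rw [greedyStep, greedyStep, if_neg hP,
        if_neg fun h => hP (h₂ x List.mem_cons_self F hF h)]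

lemma card_filter_foldr_greedyStep_add {p : α → Prop} [DecidablePred p] {L : List α}
    {T : Finset α} (hL : ∀ x ∈ L, p x) (hT : ∀ x ∈ T, ¬ p x) :
    #((L.foldr (greedyStep P) T).filter p) + #T = #(L.foldr (greedyStep P) T) := by
  have hT' : (L.foldr (greedyStep P) T).filter (fun x => ¬ p x) = T := by
    ext x
    simp only [mem_filter]
    refine ⟨fun ⟨hx, hpx⟩ => ?_, fun hx => ⟨subset_foldr_greedyStep L T hx, hT x hx⟩⟩
    have := foldr_greedyStep_subset L T hx
    simp only [mem_union, List.mem_toFinset] at this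
    exact this.resolve_right fun h => hpx (hL x h)
  have := card_filter_add_card_filter_not (s := L.foldr (greedyStep P) T) p
  rwa [hT'] at this

end Greedy

lemma List.idxOf_lt_idxOf_append_cons_iff {α : Type*} [BEq α] [LawfulBEq α] {A B : List α}
    {x y : α} (hy : y ∉ A) : (A ++ y :: B).idxOf x < (A ++ y :: B).idxOf y ↔ x ∈ A := by
  rw [List.idxOf_append_of_notMem hy, List.idxOf_cons_self]
  by_cases hx : x ∈ A
  · simpa [List.idxOf_append_of_mem hx, hx] using List.idxOf_lt_length_iff.2 hx
  · simp [List.idxOf_append_of_notMem hx, hx]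

namespace Inst

variable {N C : Type*} {I : Inst N C} {c : C} {x y z : Option N}

lemma Strict.trans (h₁ : I.Strict c x y) (h₂ : I.Strict c y z) : I.Strict c x z :=
  ⟨I.trans c x y z h₁.1 h₂.1, fun h => h₂.2 (I.trans c z x y h h₁.1)⟩

lemma Strict.irrefl : ¬ I.Strict c x x := fun h => h.2 h.1

end Inst

section MaxSize

variable {I : Inst N C} {cu1 cu2 : C} {S T N1 R : Finset N} {μ : N → Option C}
  {Q Q' : (N → Option C) → Prop}

noncomputable def maxSize (Q : (N → Option C) → Prop) : ℕ :=
  sSup {k | ∃ μ, Q μ ∧ msize μ = k}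

omit [DecidableEq N] [DecidableEq C] in
lemma bddAbove_msize (Q : (N → Option C) → Prop) :
    BddAbove {k | ∃ μ, Q μ ∧ msize μ = k} :=
  ⟨Fintype.card N, by rintro _ ⟨μ, -, rfl⟩; exact card_filter_le _ _⟩

omit [DecidableEq N] [DecidableEq C] in
lemma le_maxSize (h : Q μ) : msize μ ≤ maxSize Q :=
  le_csSup (bddAbove_msize Q) ⟨μ, h, rfl⟩

omit [DecidableEq N] [DecidableEq C] in
lemma exists_msize_eq_maxSize (h : Q fun _ => none) : ∃ μ, Q μ ∧ msize μ = maxSize Q :=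
  Nat.sSup_mem (s := {k | ∃ μ, Q μ ∧ msize μ = k}) ⟨_, _, h, rfl⟩ (bddAbove_msize Q)

omit [DecidableEq N] [DecidableEq C] in
lemma maxSize_mono (h : ∀ μ, Q μ → Q' μ) : maxSize Q ≤ maxSize Q' :=
  csSup_le_csSup' (bddAbove_msize Q') fun _ ⟨μ, hμ, hk⟩ => ⟨μ, h μ hμ, hk⟩

omit [DecidableEq N] in
lemma PMatch.anti (hST : S ⊆ T) (hμ : PMatch I cu1 cu2 T μ) : PMatch I cu1 cu2 S μ :=
  ⟨hμ.1, fun i hi => hμ.2.1 i (hST hi), hμ.2.2⟩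

lemma PMatchR.anti (hSR : S ⊆ R) (hμ : PMatchR I cu1 cu2 N1 R μ) : PMatchR I cu1 cu2 N1 S μ :=
  ⟨hμ.1.anti (union_subset_union_right hSR), fun i c hc j hj => hμ.2 i c hc j (hSR hj)⟩

lemma pmatchR_none (I : Inst N C) (cu1 cu2 : C) (N1 R : Finset N) :
    PMatchR I cu1 cu2 N1 R fun _ => none :=
  ⟨(⟨fun _ => by simp, fun _ _ => rfl, fun _ _ h => nomatch h⟩ :
      PMatch I cu1 cu2 (N1 ∪ R) _),
    fun _ _ h => nomatch h⟩

omit [DecidableEq N] in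
lemma le_msAvoid (hμ : PMatch I cu1 cu2 S μ) : msize μ ≤ msAvoid I cu1 cu2 S :=
  le_maxSize hμ

omit [DecidableEq N] in
lemma msAvoid_anti (hST : S ⊆ T) : msAvoid I cu1 cu2 T ≤ msAvoid I cu1 cu2 S :=
  maxSize_mono fun _ hμ => hμ.anti hST

lemma le_msR (hμ : PMatchR I cu1 cu2 N1 R μ) : msize μ ≤ msR I cu1 cu2 N1 R :=
  le_maxSize hμ

lemma msR_anti (hSR : S ⊆ R) : msR I cu1 cu2 N1 R ≤ msR I cu1 cu2 N1 S :=
  maxSize_mono fun _ hμ => hμ.anti hSR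

lemma exists_msize_eq_msR (I : Inst N C) (cu1 cu2 : C) (N1 R : Finset N) :
    ∃ μ, PMatchR I cu1 cu2 N1 R μ ∧ msize μ = msR I cu1 cu2 N1 R :=
  exists_msize_eq_maxSize (pmatchR_none I cu1 cu2 N1 R)

lemma msR_empty : msR I cu1 cu2 N1 ∅ = msAvoid I cu1 cu2 N1 :=
  le_antisymm (maxSize_mono fun _ hμ => by simpa using hμ.1)
    (maxSize_mono fun _ hμ => ⟨by simpa using hμ, by simp⟩)

lemma PMatchR.insert (hμ : PMatchR I cu1 cu2 N1 R μ) {j : N} (hj : μ j = none)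
    (hjk : ∀ k c, μ k = some c → ¬ I.Strict c (some j) (some k)) :
    PMatchR I cu1 cu2 N1 (insert j R) μ := by
  refine ⟨⟨hμ.1.1, fun x hx => ?_, hμ.1.2.2⟩, fun k c hk r hr => ?_⟩
  · rcases mem_union.1 hx with hx | hx
    · exact hμ.1.2.1 x (mem_union_left _ hx)
    · rcases mem_insert.1 hx with rfl | hx
      exacts [hj, hμ.1.2.1 x (mem_union_right _ hx)]
  · rcases mem_insert.1 hr with rfl | hr
    exacts [hjk k c hk, hμ.2 k c hk r hr]

end MaxSize

namespace PrioDecreases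

variable {I I' : Inst N C} {i j : N} {c cu1 cu2 : C} {x y : Option N} {S N1 R : Finset N}
  {μ : N → Option C}

omit [Fintype N] [DecidableEq N] [DecidableEq C] in
lemma strict_iff (hdec : PrioDecreases I I' i) (hx : x ≠ some i) (hy : y ≠ some i) :
    I.Strict c x y ↔ I'.Strict c x y := by
  unfold Inst.Strict
  rw [hdec.2.1 c x y hx hy, hdec.2.1 c y x hy hx]

omit [Fintype N] [DecidableEq N] [DecidableEq C] in
lemma eligible_iff (hdec : PrioDecreases I I' i) (hj : j ≠ i) :
    I.Eligible j c ↔ I'.Eligible j c :=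
  hdec.strict_iff (by simpa using hj) (by simp)

omit [Fintype N] [DecidableEq N] [DecidableEq C] in
lemma strict_of_strict_left (hdec : PrioDecreases I I' i) (hy : y ≠ some i)
    (h : I'.Strict c (some i) y) : I.Strict c (some i) y := by
  have hn : ¬ I.prio c y (some i) := fun hp => h.2 (hdec.2.2.1 c y hy hp)
  exact ⟨(I.total c (some i) y).resolve_right hn, hn⟩

omit [DecidableEq N] in
lemma isMatching_iff (hdec : PrioDecreases I I' i) : I.IsMatching μ ↔ I'.IsMatching μ := by
  unfold Inst.IsMatching
  rw [hdec.1]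

omit [DecidableEq N] in
lemma pmatch_of_pmatch (hdec : PrioDecreases I I' i) (hμ : PMatch I' cu1 cu2 S μ) :
    PMatch I cu1 cu2 S μ := by
  refine ⟨hdec.isMatching_iff.2 hμ.1, hμ.2.1, fun j c hc => ?_⟩
  obtain ⟨hc1, hc2, he⟩ := hμ.2.2 j c hc
  refine ⟨hc1, hc2, ?_⟩
  by_cases hj : j = i
  · exact hj ▸ hdec.strict_of_strict_left (by simp) (hj ▸ he)
  · exact (hdec.eligible_iff hj).2 he

omit [DecidableEq N] in
lemma pmatch (hdec : PrioDecreases I I' i) (hi : μ i = none) (hμ : PMatch I cu1 cu2 S μ) :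
    PMatch I' cu1 cu2 S μ := by
  refine ⟨hdec.isMatching_iff.1 hμ.1, hμ.2.1, fun j c hc => ?_⟩
  obtain ⟨hc1, hc2, he⟩ := hμ.2.2 j c hc
  have hj : j ≠ i := by rintro rfl; simp [hi] at hc
  exact ⟨hc1, hc2, (hdec.eligible_iff hj).1 he⟩

lemma pmatchR_of_pmatchR (hdec : PrioDecreases I I' i) (hiR : i ∉ R)
    (hμ : PMatchR I' cu1 cu2 N1 R μ) : PMatchR I cu1 cu2 N1 R μ := by
  refine ⟨hdec.pmatch_of_pmatch hμ.1, fun k c hc r hr h => hμ.2 k c hc r hr ?_⟩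
  have hri : some r ≠ some i := by simpa using ne_of_mem_of_not_mem hr hiR
  by_cases hk : k = i
  · exact hk ▸ hdec.2.2.2 c (some r) hri (hk ▸ h)
  · exact (hdec.strict_iff hri (by simpa using hk)).1 h

lemma pmatchR (hdec : PrioDecreases I I' i) (hi : μ i = none)
    (hμ : PMatchR I cu1 cu2 N1 R μ) : PMatchR I' cu1 cu2 N1 R μ := by
  refine ⟨hdec.pmatch hi hμ.1, fun k c hc r hr h => hμ.2 k c hc r hr ?_⟩
  have hk : some k ≠ some i := by rintro ⟨⟩; simp [hi] at hc
  by_cases hri : r = i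
  · exact hri ▸ hdec.strict_of_strict_left hk (hri ▸ h)
  · exact (hdec.strict_iff (by simpa using hri) hk).2 h

omit [DecidableEq N] in
lemma msAvoid_le (hdec : PrioDecreases I I' i) (S : Finset N) :
    msAvoid I' cu1 cu2 S ≤ msAvoid I cu1 cu2 S :=
  maxSize_mono fun _ => hdec.pmatch_of_pmatch

omit [DecidableEq N] in
lemma msAvoid_eq (hdec : PrioDecreases I I' i) (hiS : i ∈ S) :
    msAvoid I' cu1 cu2 S = msAvoid I cu1 cu2 S :=
  le_antisymm (hdec.msAvoid_le S) (maxSize_mono fun _ hμ => hdec.pmatch (hμ.2.1 i hiS) hμ)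

lemma msR_le (hdec : PrioDecreases I I' i) (hiR : i ∉ R) :
    msR I' cu1 cu2 N1 R ≤ msR I cu1 cu2 N1 R :=
  maxSize_mono fun _ => hdec.pmatchR_of_pmatchR hiR

end PrioDecreases

section ReverseRejecting

variable {J : Inst N C} {cu1 cu2 : C} {order : List N} {N1 R : Finset N} {μ : N → Option C}
  {j k : N} {c : C}

abbrev rrRejects (J : Inst N C) (cu1 cu2 : C) (N1 : Finset N) (x : N) (S : Finset N) : Prop :=
  msR J cu1 cu2 N1 (insert x S) = msR J cu1 cu2 N1 ∅

lemma srrRej_eq_foldr (J : Inst N C) (cu1 cu2 : C) (order : List N) (N1 : Finset N) :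
    srrRej J cu1 cu2 order N1 =
      (order.filter fun x => x ∉ N1).foldr (greedyStep (rrRejects J cu1 cu2 N1)) ∅ :=
  rfl

lemma msR_srrRej : msR J cu1 cu2 N1 (srrRej J cu1 cu2 order N1) = msR J cu1 cu2 N1 ∅ :=
  foldr_greedyStep_induction (Q := fun S => msR J cu1 cu2 N1 S = msR J cu1 cu2 N1 ∅) _ rfl
    fun _ _ _ h => h

lemma notMem_of_mem_srrRej (hj : j ∈ srrRej J cu1 cu2 order N1) : j ∉ N1 :=
  (by simpa using foldr_greedyStep_subset _ _ hj : j ∈ order ∧ j ∉ N1).2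

omit [DecidableEq N] [DecidableEq C] in
lemma msize_comp_equiv (μ : N → Option C) (e : N ≃ N) : msize (μ ∘ e) = msize μ :=
  card_equiv e (by simp)

omit [DecidableEq N] in
lemma Inst.IsMatching.comp_equiv (hμ : J.IsMatching μ) (e : N ≃ N) : J.IsMatching (μ ∘ e) :=
  fun c => (card_equiv e (by simp)).trans_le (hμ c)

noncomputable def rankSum (J : Inst N C) (μ : N → Option C) : ℕ :=
  ∑ a, (μ a).elim 0 fun c => #{b | J.Strict c (some b) (some a)}

omit [DecidableEq N] [DecidableEq C] in
lemma card_strict_lt_card_strict (h : J.Strict c (some j) (some k)) :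
    #{b | J.Strict c (some b) (some j)} < #{b | J.Strict c (some b) (some k)} := by
  refine card_lt_card ⟨fun b hb => ?_, fun hsub => ?_⟩
  · simp only [mem_filter, mem_univ, true_and] at hb ⊢
    exact hb.trans h
  · exact Inst.Strict.irrefl (I := J) (c := c) (x := some j)
      (by simpa using hsub (by simpa using h))

omit [DecidableEq C] in
lemma rankSum_comp_swap_lt (hj : μ j = none) (hk : μ k = some c)
    (hjk : J.Strict c (some j) (some k)) : rankSum J (μ ∘ Equiv.swap j k) < rankSum J μ := by
  have hjk' : j ≠ k := by rintro rfl; simp [hj] at hk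
  let w : C → N → ℕ := fun c a => #{b | J.Strict c (some b) (some a)}
  let g : N → ℕ := fun a => (μ a).elim 0 fun c => w c (Equiv.swap j k a)
  calc rankSum J (μ ∘ Equiv.swap j k) = ∑ a, g (Equiv.swap j k a) := by
        simp [rankSum, g, w]
    _ = ∑ a, g a := Equiv.sum_comp _ g
    _ < rankSum J μ := by
      refine sum_lt_sum (fun a _ => ?_) ⟨k, mem_univ k, ?_⟩
      · rcases eq_or_ne a j with rfl | haj
        · simp [g, hj]
        rcases eq_or_ne a k with rfl | hak
        · simpa [g, hk] using (card_strict_lt_card_strict hjk).le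
        · simp [g, w, Equiv.swap_apply_of_ne_of_ne haj hak]
      · simpa [g, hk] using card_strict_lt_card_strict hjk

lemma PMatchR.comp_swap (hμ : PMatchR J cu1 cu2 N1 R μ) (hj : j ∉ N1 ∪ R) (hjμ : μ j = none)
    (hk : μ k = some c) (hjk : J.Strict c (some j) (some k)) :
    PMatchR J cu1 cu2 N1 R (μ ∘ Equiv.swap j k) := by
  have hkel := hμ.1.2.2 k c hk
  refine ⟨⟨hμ.1.1.comp_equiv _, fun x hx => ?_, fun a c' ha => ?_⟩, fun a c' ha r hr => ?_⟩
  · have hxj : x ≠ j := by rintro rfl; exact hj hx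
    rcases eq_or_ne x k with rfl | hxk
    · simpa using hjμ
    · simpa [Equiv.swap_apply_of_ne_of_ne hxj hxk] using hμ.1.2.1 x hx
  · rcases eq_or_ne a j with rfl | haj
    · obtain rfl : c = c' := by simpa [hk] using ha
      exact ⟨hkel.1, hkel.2.1, hjk.trans hkel.2.2⟩
    rcases eq_or_ne a k with rfl | hak
    · simp [hjμ] at ha
    · exact hμ.1.2.2 a c' (by simpa [Equiv.swap_apply_of_ne_of_ne haj hak] using ha)
  · rcases eq_or_ne a j with rfl | haj
    · obtain rfl : c = c' := by simpa [hk] using ha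
      exact fun hr' => hμ.2 k c hk r hr (hr'.trans hjk)
    rcases eq_or_ne a k with rfl | hak
    · simp [hjμ] at ha
    · exact hμ.2 a c' (by simpa [Equiv.swap_apply_of_ne_of_ne haj hak] using ha) r hr

/-- If an unmatched non-rejected agent existed, moving units to agents of higher priority as long
as possible would leave one that the RR rule could have rejected. -/
lemma ne_none_of_notMem_srrRej (hb : IsBaseline order)
    (hμ : PMatchR J cu1 cu2 N1 (srrRej J cu1 cu2 order N1) μ)
    (hmax : msize μ = msR J cu1 cu2 N1 (srrRej J cu1 cu2 order N1))
    (hj : j ∉ N1 ∪ srrRej J cu1 cu2 order N1) : μ j ≠ none := by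
  set R := srrRej J cu1 cu2 order N1
  induction h : rankSum J μ using Nat.strong_induction_on generalizing μ j with
  | _ n ih =>
  intro hjμ
  by_cases hswap : ∃ k c, μ k = some c ∧ J.Strict c (some j) (some k)
  · obtain ⟨k, c, hk, hjk⟩ := hswap
    have hkR : k ∉ N1 ∪ R := fun h => by simp [hμ.1.2.1 k h] at hk
    exact ih _ (h ▸ rankSum_comp_swap_lt hjμ hk hjk) (hμ.comp_swap hj hjμ hk hjk)
      (by rw [msize_comp_equiv, hmax]) hkR rfl (by simpa using hjμ)
  · simp only [not_exists, not_and] at hswap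
    have hjL : j ∈ order.filter fun x => x ∉ N1 := by
      simpa [hb.2 j] using fun h => hj (mem_union_left _ h)
    obtain ⟨S, hSR, hrej⟩ := exists_not_of_notMem_foldr_greedyStep hjL
      fun h => hj (mem_union_right _ h)
    refine hrej (le_antisymm (msR_anti (empty_subset _)) ?_)
    calc msR J cu1 cu2 N1 ∅ = msize μ := by rw [hmax, msR_srrRej]
      _ ≤ _ := le_msR ((hμ.anti hSR).insert hjμ hswap)

lemma eq_none_iff_mem_union_srrRej (hb : IsBaseline order)
    (hμ : PMatchR J cu1 cu2 N1 (srrRej J cu1 cu2 order N1) μ)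
    (hmax : msize μ = msR J cu1 cu2 N1 (srrRej J cu1 cu2 order N1)) :
    μ j = none ↔ j ∈ N1 ∪ srrRej J cu1 cu2 order N1 :=
  ⟨fun h => by_contra fun hj => ne_none_of_notMem_srrRej hb hμ hmax hj h, hμ.1.2.1 j⟩

lemma filter_unmatched_eq (hb : IsBaseline order)
    (hμ : PMatchR J cu1 cu2 N1 (srrRej J cu1 cu2 order N1) μ)
    (hmax : msize μ = msR J cu1 cu2 N1 (srrRej J cu1 cu2 order N1)) (p : N → Prop)
    [DecidablePred p] :
    univ.filter (fun j => j ∉ N1 ∧ μ j = none ∧ p j) =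
      (srrRej J cu1 cu2 order N1).filter p := by
  ext j
  simp only [mem_filter, mem_univ, true_and, eq_none_iff_mem_union_srrRej hb hμ hmax, mem_union]
  constructor
  · rintro ⟨hj, hjN1 | hjR, hp⟩
    exacts [absurd hjN1 hj, ⟨hjR, hp⟩]
  · rintro ⟨hjR, hp⟩
    exact ⟨notMem_of_mem_srrRej hjR, Or.inr hjR, hp⟩

lemma card_add_card_srrRej_add_msR (J : Inst N C) (cu1 cu2 : C) (N1 : Finset N)
    (hb : IsBaseline order) :
    #N1 + #(srrRej J cu1 cu2 order N1) + msR J cu1 cu2 N1 ∅ = Fintype.card N := by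
  obtain ⟨μ, hμ, hmax⟩ := exists_msize_eq_msR J cu1 cu2 N1 (srrRej J cu1 cu2 order N1)
  have hmatched : univ.filter (fun a => μ a ≠ none) = (N1 ∪ srrRej J cu1 cu2 order N1)ᶜ := by
    ext a
    simp [eq_none_iff_mem_union_srrRej hb hμ hmax]
  have hdisj : Disjoint N1 (srrRej J cu1 cu2 order N1) :=
    disjoint_right.2 fun _ => notMem_of_mem_srrRej
  rw [← msR_srrRej, ← hmax, msize, hmatched, ← card_union_of_disjoint hdisj, add_comm,
    card_compl_add_card]

end ReverseRejecting

section SmartReverseRejecting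

variable {I I' J : Inst N C} {i : N} {cu1 cu2 : C} {order : List N} {N1 : Finset N}

abbrev n1Admits (J : Inst N C) (cu1 cu2 : C) (x : N) (S : Finset N) : Prop :=
  #S < J.quota cu1 ∧ msAvoid J cu1 cu2 (insert x S) = msAvoid J cu1 cu2 ∅

lemma srrN1_eq_foldr (J : Inst N C) (cu1 cu2 : C) (order : List N) :
    srrN1 J cu1 cu2 order = order.reverse.foldr (greedyStep (n1Admits J cu1 cu2)) ∅ := by
  rw [srrN1, List.foldl_eq_foldr_reverse]
  rfl

lemma msAvoid_srrN1 : msAvoid J cu1 cu2 (srrN1 J cu1 cu2 order) = msAvoid J cu1 cu2 ∅ := by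
  rw [srrN1_eq_foldr]
  exact foldr_greedyStep_induction (Q := fun S => msAvoid J cu1 cu2 S = msAvoid J cu1 cu2 ∅) _
    rfl fun _ _ _ h => h.2

lemma msAvoid_insert_of_mem_srrRej (hiR : i ∈ srrRej J cu1 cu2 order N1) :
    msAvoid J cu1 cu2 (insert i N1) = msAvoid J cu1 cu2 N1 := by
  obtain ⟨μ, hμ, hmax⟩ := exists_msize_eq_msR J cu1 cu2 N1 (srrRej J cu1 cu2 order N1)
  refine le_antisymm (msAvoid_anti (subset_insert i N1)) ?_
  rw [← msR_empty, ← msR_srrRej (order := order), ← hmax]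
  exact le_msAvoid (hμ.1.anti (insert_subset (mem_union_right _ hiR) subset_union_left))

namespace PrioDecreases

lemma srrN1_eq (hdec : PrioDecreases I I' i)
    (hiR : i ∈ srrRej I cu1 cu2 order (srrN1 I cu1 cu2 order)) :
    srrN1 I' cu1 cu2 order = srrN1 I cu1 cu2 order := by
  set m := msAvoid I cu1 cu2 ∅
  have hins : msAvoid I cu1 cu2 (insert i (srrN1 I cu1 cu2 order)) = m :=
    (msAvoid_insert_of_mem_srrRej hiR).trans msAvoid_srrN1
  have hsub : ∀ S ⊆ srrN1 I cu1 cu2 order, msAvoid I' cu1 cu2 S = m := fun S hS =>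
    le_antisymm ((hdec.msAvoid_le S).trans (msAvoid_anti (empty_subset S))) <| calc
      m = msAvoid I' cu1 cu2 (insert i (srrN1 I cu1 cu2 order)) :=
        hins.symm.trans (hdec.msAvoid_eq (mem_insert_self _ _)).symm
      _ ≤ msAvoid I' cu1 cu2 S := msAvoid_anti (hS.trans (subset_insert _ _))
  have hm : msAvoid I' cu1 cu2 ∅ = m := hsub ∅ (empty_subset _)
  rw [srrN1_eq_foldr I', srrN1_eq_foldr I]
  refine foldr_greedyStep_congr (fun x S hxS h => ⟨hdec.1 ▸ h.1, ?_⟩)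
    fun x _ S _ h => ⟨hdec.1 ▸ h.1, le_antisymm (msAvoid_anti (empty_subset _)) ?_⟩
  · rw [← srrN1_eq_foldr] at hxS
    rw [hsub _ hxS, hm]
  · calc m = msAvoid I' cu1 cu2 (insert x S) := hm.symm.trans h.2.symm
      _ ≤ msAvoid I cu1 cu2 (insert x S) := hdec.msAvoid_le _

lemma msR_eq_of_subset_srrRej (hdec : PrioDecreases I I' i)
    (hiR : i ∈ srrRej I cu1 cu2 order N1) {S : Finset N} (hS : S ⊆ srrRej I cu1 cu2 order N1) :
    msR I' cu1 cu2 N1 S = msR I cu1 cu2 N1 ∅ := by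
  obtain ⟨μ, hμ, hmax⟩ := exists_msize_eq_msR I cu1 cu2 N1 (srrRej I cu1 cu2 order N1)
  refine le_antisymm ((msR_anti (empty_subset S)).trans (hdec.msR_le (notMem_empty i))) ?_
  rw [← msR_srrRej (order := order), ← hmax]
  exact le_msR ((hdec.pmatchR (hμ.1.2.1 i (mem_union_right _ hiR)) hμ).anti hS)

lemma srrRej_eq_foldr_append_cons (hdec : PrioDecreases I I' i)
    (hiR : i ∈ srrRej I cu1 cu2 order N1) {L₁ L₂ : List N}
    (hL : order.filter (fun x => x ∉ N1) = L₁ ++ i :: L₂) (hi₁ : i ∉ L₁)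
    (hi₂ : i ∉ L₂) :
    ∃ T, i ∈ T ∧ T ⊆ insert i L₂.toFinset ∧
      srrRej I cu1 cu2 order N1 = L₁.foldr (greedyStep (rrRejects I cu1 cu2 N1)) T ∧
      srrRej I' cu1 cu2 order N1 = L₁.foldr (greedyStep (rrRejects I' cu1 cu2 N1)) T := by
  set T₂ := L₂.foldr (greedyStep (rrRejects I cu1 cu2 N1)) ∅
  have hR : srrRej I cu1 cu2 order N1 = L₁.foldr (greedyStep (rrRejects I cu1 cu2 N1))
      (greedyStep (rrRejects I cu1 cu2 N1) i T₂) := by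
    rw [srrRej_eq_foldr, hL, List.foldr_append, List.foldr_cons]
  have hacc : rrRejects I cu1 cu2 N1 i T₂ :=
    greedyStep_of_mem_foldr_append_cons (by rwa [← hL, ← srrRej_eq_foldr]) hi₁ hi₂
      (notMem_empty i)
  have hstep : greedyStep (rrRejects I cu1 cu2 N1) i T₂ = insert i T₂ := if_pos hacc
  have hTR : insert i T₂ ⊆ srrRej I cu1 cu2 order N1 := by
    rw [hR, hstep]
    exact subset_foldr_greedyStep _ _
  have haccepts' :
      ∀ x S, insert x S ⊆ srrRej I cu1 cu2 order N1 → rrRejects I' cu1 cu2 N1 x S :=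
    fun x S h => (hdec.msR_eq_of_subset_srrRej hiR h).trans
      (hdec.msR_eq_of_subset_srrRej hiR (empty_subset _)).symm
  have hT₂ : L₂.foldr (greedyStep (rrRejects I' cu1 cu2 N1)) ∅ = T₂ := by
    refine foldr_greedyStep_congr
      (fun x S hS _ => haccepts' x S (hS.trans ((subset_insert i T₂).trans hTR)))
      fun x hx S hS h => le_antisymm (msR_anti (empty_subset _)) ?_
    have hiS : i ∉ insert x S := by
      have := hS.trans (foldr_greedyStep_subset L₂ ∅)
      simp only [mem_insert, not_or]
      exact ⟨fun h => hi₂ (h ▸ hx), fun h => hi₂ (by simpa using this h)⟩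
    calc msR I cu1 cu2 N1 ∅ = msR I' cu1 cu2 N1 (insert x S) :=
          (h.trans (hdec.msR_eq_of_subset_srrRej hiR (empty_subset _))).symm
      _ ≤ msR I cu1 cu2 N1 (insert x S) := hdec.msR_le hiS
  refine ⟨insert i T₂, mem_insert_self i T₂,
    insert_subset_insert i (by simpa using foldr_greedyStep_subset L₂ ∅), hstep ▸ hR, ?_⟩
  rw [srrRej_eq_foldr, hL, List.foldr_append, List.foldr_cons, hT₂, greedyStep,
    if_pos (haccepts' i T₂ hTR)]

lemma mem_srrRej_and_card_filter_eq (hb : IsBaseline order) (hdec : PrioDecreases I I' i)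
    (hiR : i ∈ srrRej I cu1 cu2 order N1) :
    i ∈ srrRej I' cu1 cu2 order N1 ∧
      #((srrRej I' cu1 cu2 order N1).filter fun j => order.idxOf j < order.idxOf i) =
        #((srrRej I cu1 cu2 order N1).filter fun j => order.idxOf j < order.idxOf i) := by
  obtain ⟨A, B, hAB⟩ := List.append_of_mem (hb.2 i)
  have hnd := hb.1
  rw [hAB, List.nodup_middle, List.nodup_cons, List.mem_append, not_or, List.nodup_append] at hnd
  obtain ⟨⟨hiA, hiB⟩, -, -, hAB'⟩ := hnd
  obtain ⟨T, hiT, hTB, hR, hR'⟩ := hdec.srrRej_eq_foldr_append_cons hiR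
    (L₁ := A.filter (· ∉ N1)) (L₂ := B.filter (· ∉ N1))
    (by rw [hAB, List.filter_append,
      List.filter_cons_of_pos (by simpa using notMem_of_mem_srrRej hiR)])
    (fun h => hiA (List.mem_of_mem_filter h)) (fun h => hiB (List.mem_of_mem_filter h))
  have hA : ∀ x ∈ A.filter (· ∉ N1), order.idxOf x < order.idxOf i := fun x hx => by
    rw [hAB]
    exact (List.idxOf_lt_idxOf_append_cons_iff hiA).2 (List.mem_of_mem_filter hx)
  have hT : ∀ x ∈ T, ¬ order.idxOf x < order.idxOf i := fun x hx hlt => by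
    rw [hAB, List.idxOf_lt_idxOf_append_cons_iff hiA] at hlt
    rcases mem_insert.1 (hTB hx) with rfl | hxB
    · exact hiA hlt
    · exact hAB' x hlt x (List.mem_of_mem_filter (List.mem_toFinset.1 hxB)) rfl
  have hcard := card_add_card_srrRej_add_msR I cu1 cu2 N1 hb
  have hcard' := card_add_card_srrRej_add_msR I' cu1 cu2 N1 hb
  have hm := hdec.msR_eq_of_subset_srrRej hiR (empty_subset _)
  have h := card_filter_foldr_greedyStep_add (P := rrRejects I cu1 cu2 N1) hA hT
  have h' := card_filter_foldr_greedyStep_add (P := rrRejects I' cu1 cu2 N1) hA hT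
  rw [← hR] at h
  rw [← hR'] at h'
  exact ⟨hR' ▸ subset_foldr_greedyStep _ _ hiT, by omega⟩

end PrioDecreases

omit [DecidableEq C] in
lemma srrFinal_eq_none_iff {μP : N → Option C} :
    srrFinal I cu1 cu2 order N1 μP i = none ↔ i ∉ N1 ∧ μP i = none ∧
      I.quota cu2 ≤
        #(univ.filter fun j => j ∉ N1 ∧ μP j = none ∧ order.idxOf j < order.idxOf i) := by
  unfold srrFinal
  by_cases h : i ∈ N1
  · simp [h]
  · cases μP i <;> simp [h]

end SmartReverseRejecting

theorem srr_strategyproof_general (I I' : Inst N C) (cu1 cu2 : C) (order : List N) (i : N)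
    (μ μ' : N → Option C) (hb : IsBaseline order)
    (hdec : PrioDecreases I I' i)
    (hout : IsSRROutcome I cu1 cu2 order μ) (hout' : IsSRROutcome I' cu1 cu2 order μ')
    (hunmatched : μ i = none) :
    μ' i = none := by
  obtain ⟨μP, hP, hPmax, rfl⟩ := hout
  obtain ⟨μP', hP', hPmax', rfl⟩ := hout'
  obtain ⟨hiN1, hiP, hq⟩ := srrFinal_eq_none_iff.1 hunmatched
  have hiR : i ∈ srrRej I cu1 cu2 order (srrN1 I cu1 cu2 order) :=
    (mem_union.1 ((eq_none_iff_mem_union_srrRej hb hP hPmax).1 hiP)).resolve_left hiN1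
  rw [hdec.srrN1_eq hiR] at hP' hPmax' ⊢
  obtain ⟨hiR', hcard⟩ := hdec.mem_srrRej_and_card_filter_eq hb hiR
  rw [filter_unmatched_eq hb hP hPmax] at hq
  refine srrFinal_eq_none_iff.2
    ⟨hiN1, (eq_none_iff_mem_union_srrRej hb hP' hPmax').2 (mem_union_right _ hiR'), ?_⟩
  rw [filter_unmatched_eq hb hP' hPmax', hcard, ← hdec.1]
  exact hq

/-- The SRR rule is strategyproof: if agent `i`'s priority (for the
preferential categories) decreases from `I` to `I'`, where in both instances the priorities
of `c_u^1` and `c_u^2` equal the same baseline ordering and all agents are eligible for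
them, and `i` is unmatched under the SRR rule at `I`, then `i` is unmatched at `I'`. -/
theorem srr_strategyproof (I I' : Inst N C) (cu1 cu2 : C) (order : List N) (i : N)
    (μ μ' : N → Option C) (hne : cu1 ≠ cu2) (hb : IsBaseline order)
    (h1E : ∀ j : N, I.Eligible j cu1) (h2E : ∀ j : N, I.Eligible j cu2)
    (h1E' : ∀ j : N, I'.Eligible j cu1) (h2E' : ∀ j : N, I'.Eligible j cu2)
    (h1P : ∀ j k : N, I.Strict cu1 (some j) (some k) ↔ order.idxOf j < order.idxOf k)
    (h2P : ∀ j k : N, I.Strict cu2 (some j) (some k) ↔ order.idxOf j < order.idxOf k)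
    (h1P' : ∀ j k : N, I'.Strict cu1 (some j) (some k) ↔ order.idxOf j < order.idxOf k)
    (h2P' : ∀ j k : N, I'.Strict cu2 (some j) (some k) ↔ order.idxOf j < order.idxOf k)
    (hdec : PrioDecreases I I' i)
    (hout : IsSRROutcome I cu1 cu2 order μ) (hout' : IsSRROutcome I' cu1 cu2 order μ')
    (hunmatched : μ i = none) :
    μ' i = none :=
  srr_strategyproof_general I I' cu1 cu2 order i μ μ' hb hdec hout hout' hunmatched
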